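/- arXiv:1201.2980 — 2 statements merged into one kernel-verified Lean document; each statement's English description precedes it below -/
import Mathlib

section
/- Combination axiom: for soft sets (F,A) and (G,B) over U and any S with A ⊆ S ⊆ A ∪ B, ((F,A) ⊓ε (G,B))↓S = (F,A) ⊓ε (G,B)↓(S ∩ B). -/
open scoped Classical

/-- A soft set over a universe `U` with parameter set `E`: a domain `A ⊆ E` together with
a map `F` giving, for each parameter in the domain, a subset of `U`.  Values outside the
domain are normalized to `∅`, so that Lean equality coincides with equality of the
parameter set together with the mapping on it. -/
@[ext]
structure SoftSet (U E : Type*) where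
  dom : Set E
  F : E → Set U
  zero : ∀ e ∉ dom, F e = ∅

/-- Extended intersection `(F,A) ⊓ε (G,B)`: domain `A ∪ B`, with values `F e` on `A \ B`,
`G e` on `B \ A`, and `F e ∩ G e` on `A ∩ B`. -/
noncomputable def extInter {U E : Type*} (s t : SoftSet U E) : SoftSet U E where
  dom := s.dom ∪ t.dom
  F := fun e =>
    if e ∈ s.dom then (if e ∈ t.dom then s.F e ∩ t.F e else s.F e)
    else if e ∈ t.dom then t.F e else ∅
  zero := by
    intro e he
    rw [Set.mem_union, not_or] at he
    simp [he.1, he.2]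

/-- Projection `(F,A)↓B`: restriction of the mapping to `B`. -/
noncomputable def proj {U E : Type*} (s : SoftSet U E) (B : Set E) : SoftSet U E where
  dom := B
  F := fun e => if e ∈ B then s.F e else ∅
  zero := by intro e he; simp [he]

/-- The absolute soft set `Ã` with domain `A`: every parameter in `A` is sent to `U`. -/
noncomputable def absSoft (U : Type*) {E : Type*} (A : Set E) : SoftSet U E where
  dom := A
  F := fun e => if e ∈ A then Set.univ else ∅
  zero := by intro e he; simp [he]

/-- The induced order on soft sets: `(F,A) ≤ (G,B)` iff `A ⊆ B` and `G e ⊆ F e` for all `e ∈ A`. -/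
def sle {U E : Type*} (s t : SoftSet U E) : Prop :=
  s.dom ⊆ t.dom ∧ ∀ e ∈ s.dom, t.F e ⊆ s.F e

namespace SoftSet

variable {U E : Type*}

theorem ext_of_eqOn_dom {s t : SoftSet U E} (hdom : s.dom = t.dom)
    (hF : ∀ e ∈ s.dom, s.F e = t.F e) : s = t := by
  ext1
  · exact hdom
  · funext e
    by_cases he : e ∈ s.dom
    · exact hF e he
    · rw [s.zero e he, t.zero e (hdom ▸ he)]

theorem proj_F_of_mem (s : SoftSet U E) {B : Set E} {e : E} (he : e ∈ B) :
    (proj s B).F e = s.F e := if_pos he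

theorem proj_inter_dom_F (s : SoftSet U E) {S : Set E} {e : E} (he : e ∈ S) :
    (proj s (S ∩ s.dom)).F e = s.F e := by
  by_cases hs : e ∈ s.dom
  · exact proj_F_of_mem s ⟨he, hs⟩
  · rw [(proj s _).zero e fun h => hs h.2, s.zero e hs]

theorem extInter_F_congr_right (s : SoftSet U E) {t t' : SoftSet U E} {e : E}
    (hmem : e ∈ t.dom ↔ e ∈ t'.dom) (hF : t.F e = t'.F e) :
    (extInter s t).F e = (extInter s t').F e := by
  simp only [extInter, hmem, hF]

end SoftSet

theorem combination_axiom {U E : Type*} (s t : SoftSet U E) (S : Set E)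
    (h1 : s.dom ⊆ S) (h2 : S ⊆ s.dom ∪ t.dom) :
    proj (extInter s t) S = extInter s (proj t (S ∩ t.dom)) := by
  have hdom : S = s.dom ∪ S ∩ t.dom := by
    rw [Set.union_inter_distrib_left, Set.union_eq_right.2 h1, Set.inter_eq_left.2 h2]
  refine SoftSet.ext_of_eqOn_dom hdom fun e (he : e ∈ S) => ?_
  rw [SoftSet.proj_F_of_mem _ he]
  exact SoftSet.extInter_F_congr_right s (and_iff_right he).symm
    (SoftSet.proj_inter_dom_F t he).symm
end

section
/- The extended intersection of two soft sets is their least upper bound: for soft sets (F,A) and (G,B) over U, (F,A) ⊓ε (G,B) is the supremum of {(F,A),(G,B)} with respect to the order (F,A) ≤ (G,B) iff A ⊆ B and G(e) ⊆ F(e) for all e ∈ A. -/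
open scoped Classical

namespace SoftSet

variable {U E : Type*} {s t w : SoftSet U E} {e : E}

theorem extInter_F_subset_left (he : e ∈ s.dom) : (extInter s t).F e ⊆ s.F e := by
  by_cases het : e ∈ t.dom <;> simp [extInter, he, het]

theorem extInter_F_subset_right (he : e ∈ t.dom) : (extInter s t).F e ⊆ t.F e := by
  by_cases hes : e ∈ s.dom <;> simp [extInter, he, hes]

theorem subset_extInter_F {X : Set U} (he : e ∈ (extInter s t).dom)
    (hs : e ∈ s.dom → X ⊆ s.F e) (ht : e ∈ t.dom → X ⊆ t.F e) : X ⊆ (extInter s t).F e := by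
  rcases he with hes | het
  · by_cases het : e ∈ t.dom
    · simpa [extInter, hes, het] using Set.subset_inter (hs hes) (ht het)
    · simpa [extInter, hes, het] using hs hes
  · by_cases hes : e ∈ s.dom
    · simpa [extInter, hes, het] using Set.subset_inter (hs hes) (ht het)
    · simpa [extInter, hes, het] using ht het

theorem sle_extInter_left : sle s (extInter s t) :=
  ⟨Set.subset_union_left, fun _ he => extInter_F_subset_left he⟩

theorem sle_extInter_right : sle t (extInter s t) :=
  ⟨Set.subset_union_right, fun _ he => extInter_F_subset_right he⟩

theorem extInter_sle (hs : sle s w) (ht : sle t w) : sle (extInter s t) w :=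
  ⟨Set.union_subset hs.1 ht.1, fun e he =>
    subset_extInter_F he (hs.2 e) (ht.2 e)⟩

end SoftSet

theorem extInter_isLUB_pair {U E : Type*} (s t : SoftSet U E) :
    sle s (extInter s t) ∧ sle t (extInter s t) ∧
    (∀ w : SoftSet U E, sle s w → sle t w → sle (extInter s t) w) :=
  ⟨SoftSet.sle_extInter_left, SoftSet.sle_extInter_right,
    fun _ => SoftSet.extInter_sle⟩
end
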